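/- arXiv:1208.6229 — 4 statements merged into one kernel-verified Lean document; each statement's English description precedes it below -/
import Mathlib

section
/- For f : ℤⁿ → ℂ define f° : ℤⁿ × 𝕋 → ℂ by f°(x, ξ) = f(x) · conj(ξ), where 𝕋 is the unit circle with normalized Haar (arc-length) measure dη. Then for all absolutely summable f, g : ℤⁿ → ℂ and all (x, ξ) ∈ ℤⁿ × 𝕋: (a) Σ_{y ∈ ℤⁿ} ∫_𝕋 f°(y, η) · g°((y, η)⁻¹ (x, ξ)) dη = (f ♮ g)°(x, ξ), where the group operations on ℤⁿ × 𝕋 are (x, ξ)(y, η) = (x+y, σ(x, y) ξ η) and (x, ξ)⁻¹ = (−x, conj(σ(x, −x) ξ)); (b) (f*)°(x, ξ) = conj(f°((x, ξ)⁻¹)); (c) Σ_{y ∈ ℤⁿ} ∫_𝕋 |f°(y, η)| dη = Σ_{y ∈ ℤⁿ} |f(y)|. Thus f ↦ f° is an isometric *-homomorphism of the twisted convolution algebra ℓ¹(ℤⁿ, θ) into L¹ of this group. -/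
open scoped BigOperators
open Filter Topology

noncomputable section

/-- The cocycle σ(l,m) = ∏_{1 ≤ j < k ≤ n} θ_{k,j}^{l_k m_j}. -/
def coc {n : ℕ} (θ : Fin n → Fin n → ℂ) (l m : Fin n → ℤ) : ℂ :=
  ∏ p ∈ Finset.univ.filter (fun p : Fin n × Fin n => p.1 < p.2), θ p.2 p.1 ^ (l p.2 * m p.1)

/-- Twisted convolution (f ♮ g)(x) = Σ_y f(y) g(x−y) σ(y, x−y). -/
def tconv {n : ℕ} (σ : (Fin n → ℤ) → (Fin n → ℤ) → ℂ) (f g : (Fin n → ℤ) → ℂ) :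
    (Fin n → ℤ) → ℂ :=
  fun x => ∑' y, f y * g (x - y) * σ y (x - y)

/-- δ_y, the indicator of {y}. -/
def delta {n : ℕ} (y : Fin n → ℤ) : (Fin n → ℤ) → ℂ := fun x => if x = y then 1 else 0

/-- The involution f*(x) = conj(σ(x, −x) f(−x)). -/
def tinv {n : ℕ} (σ : (Fin n → ℤ) → (Fin n → ℤ) → ℂ) (f : (Fin n → ℤ) → ℂ) :
    (Fin n → ℤ) → ℂ :=
  fun x => starRingEnd ℂ (σ x (-x) * f (-x))

/-- The multiplication (x,ξ)(y,η) = (x+y, σ(x,y) ξ η) on ℤⁿ × ℂ ⊇ ℤⁿ × 𝕋. -/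
def Gmul {n : ℕ} (σ : (Fin n → ℤ) → (Fin n → ℤ) → ℂ) (a b : (Fin n → ℤ) × ℂ) :
    (Fin n → ℤ) × ℂ :=
  (a.1 + b.1, σ a.1 b.1 * a.2 * b.2)

/-- The inverse (x,ξ)⁻¹ = (−x, conj(σ(x,−x) ξ)). -/
def Ginv {n : ℕ} (σ : (Fin n → ℤ) → (Fin n → ℤ) → ℂ) (a : (Fin n → ℤ) × ℂ) :
    (Fin n → ℤ) × ℂ :=
  (-a.1, starRingEnd ℂ (σ a.1 (-a.1) * a.2))

/-- f°(x, ξ) = f(x) conj(ξ). -/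
def circFn {n : ℕ} (f : (Fin n → ℤ) → ℂ) (a : (Fin n → ℤ) × ℂ) : ℂ :=
  f a.1 * starRingEnd ℂ a.2

/-! Each fibre integral has a constant integrand, because |η| = 1 makes conj(η) η = 1;
what is left of the group product is the cocycle identity conj σ(−y, x) σ(y, −y) = σ(y, x − y),
which holds because σ is a bicharacter with values in the unit circle. -/

namespace TwistedEmbedding

open Complex

variable {n : ℕ} {θ : Fin n → Fin n → ℂ}

theorem coc_add_right (hθ : ∀ j k, θ j k ≠ 0) (l m m' : Fin n → ℤ) :
    coc θ l (m + m') = coc θ l m * coc θ l m' := by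
  simp only [coc, ← Finset.prod_mul_distrib, ← zpow_add₀ (hθ _ _), Pi.add_apply, mul_add]

theorem conj_coc_neg_left (hUnit : ∀ j k, ‖θ j k‖ = 1) (l m : Fin n → ℤ) :
    starRingEnd ℂ (coc θ (-l) m) = coc θ l m := by
  simp only [coc, map_prod, map_zpow₀, ← inv_eq_conj (hUnit _ _), inv_zpow', Pi.neg_apply,
    neg_mul, neg_neg]

theorem conj_coc_neg_left_mul (hUnit : ∀ j k, ‖θ j k‖ = 1) (x y : Fin n → ℤ) :
    starRingEnd ℂ (coc θ (-y) x) * coc θ y (-y) = coc θ y (x - y) := by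
  have hθ : ∀ j k, θ j k ≠ 0 := fun j k => norm_ne_zero_iff.mp (by simp [hUnit j k])
  rw [conj_coc_neg_left hUnit, ← coc_add_right hθ, sub_eq_add_neg]

theorem circFn_mul_circFn_Gmul_Ginv (hUnit : ∀ j k, ‖θ j k‖ = 1) (f g : (Fin n → ℤ) → ℂ)
    (x y : Fin n → ℤ) (ξ η : ℂ) (hη : ‖η‖ = 1) :
    circFn f (y, η) * circFn g (Gmul (coc θ) (Ginv (coc θ) (y, η)) (x, ξ))
      = f y * g (x - y) * coc θ y (x - y) * starRingEnd ℂ ξ := by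
  simp only [circFn, Gmul, Ginv, map_mul, conj_conj, neg_add_eq_sub]
  calc f y * starRingEnd ℂ η *
        (g (x - y) * (starRingEnd ℂ (coc θ (-y) x) * (coc θ y (-y) * η) * starRingEnd ℂ ξ))
      = (starRingEnd ℂ (coc θ (-y) x) * coc θ y (-y)) * (starRingEnd ℂ η * η)
          * (f y * g (x - y) * starRingEnd ℂ ξ) := by ring
    _ = f y * g (x - y) * coc θ y (x - y) * starRingEnd ℂ ξ := by
      rw [conj_coc_neg_left_mul hUnit, conj_mul', hη]
      push_cast
      ring

theorem norm_exp_two_pi_I_mul (t : ℝ) : ‖exp (2 * Real.pi * I * t)‖ = 1 := by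
  simpa [mul_comm, mul_left_comm] using norm_exp_ofReal_mul_I (2 * Real.pi * t)

theorem intervalIntegral_circle_eq_of_eq_const {E : Type*} [NormedAddCommGroup E]
    [NormedSpace ℝ E] [CompleteSpace E] {F : ℂ → E} {c : E} (hF : ∀ η : ℂ, ‖η‖ = 1 → F η = c) :
    ∫ t in (0:ℝ)..1, F (exp (2 * Real.pi * I * t)) = c := by
  rw [intervalIntegral.integral_congr (g := fun _ => c)
    (fun t _ => hF _ (norm_exp_two_pi_I_mul t)), intervalIntegral.integral_const]
  simp

end TwistedEmbedding

open TwistedEmbedding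

theorem statement5_general {n : ℕ} (θ : Fin n → Fin n → ℂ)
    (hUnit : ∀ j k, ‖θ j k‖ = 1)
    (f g : (Fin n → ℤ) → ℂ) :
    -- (a) group convolution of f° and g° equals (f ♮ g)°
    (∀ (x : Fin n → ℤ) (ξ : ℂ), ‖ξ‖ = 1 →
      (∑' y : Fin n → ℤ, ∫ t in (0:ℝ)..1,
          circFn f (y, Complex.exp (2 * Real.pi * Complex.I * t)) *
            circFn g (Gmul (coc θ)
              (Ginv (coc θ) (y, Complex.exp (2 * Real.pi * Complex.I * t))) (x, ξ)))
        = circFn (tconv (coc θ) f g) (x, ξ)) ∧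
    -- (b) compatibility with the involution
    (∀ (x : Fin n → ℤ) (ξ : ℂ), ‖ξ‖ = 1 →
      circFn (tinv (coc θ) f) (x, ξ)
        = starRingEnd ℂ (circFn f (Ginv (coc θ) (x, ξ)))) ∧
    -- (c) isometry of the embedding
    (∑' y : Fin n → ℤ, ∫ t in (0:ℝ)..1,
        ‖circFn f (y, Complex.exp (2 * Real.pi * Complex.I * t))‖)
      = ∑' y : Fin n → ℤ, ‖f y‖ := by
  refine ⟨fun x ξ _ => ?_, fun x ξ _ => ?_, ?_⟩
  · calc _ = ∑' y, f y * g (x - y) * coc θ y (x - y) * starRingEnd ℂ ξ :=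
          tsum_congr fun y => intervalIntegral_circle_eq_of_eq_const fun η hη =>
            circFn_mul_circFn_Gmul_Ginv hUnit f g x y ξ η hη
      _ = circFn (tconv (coc θ) f g) (x, ξ) := tsum_mul_right
  · simp only [circFn, tinv, Ginv, map_mul, Complex.conj_conj]
    ring
  · exact tsum_congr fun y => intervalIntegral_circle_eq_of_eq_const
      (F := fun η => ‖circFn f (y, η)‖) fun η hη => by simp [circFn, hη]

/-- f ↦ f° with f°(x,ξ) = f(x) conj(ξ) is an isometric *-homomorphism of
ℓ¹(ℤⁿ, θ) into L¹(G), where G = ℤⁿ × 𝕋; the Haar integral over 𝕋 is parametrized by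
t ↦ e^{2πit}, t ∈ [0,1] (normalized arc-length measure). -/
theorem statement5 {n : ℕ} (θ : Fin n → Fin n → ℂ)
    (hUnit : ∀ j k, ‖θ j k‖ = 1)
    (hHerm : ∀ j k, θ k j = starRingEnd ℂ (θ j k))
    (hDiag : ∀ j, θ j j = 1)
    (f g : (Fin n → ℤ) → ℂ)
    (hf : Summable (fun x => ‖f x‖))
    (hg : Summable (fun x => ‖g x‖)) :
    -- (a) group convolution of f° and g° equals (f ♮ g)°
    (∀ (x : Fin n → ℤ) (ξ : ℂ), ‖ξ‖ = 1 →
      (∑' y : Fin n → ℤ, ∫ t in (0:ℝ)..1,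
          circFn f (y, Complex.exp (2 * Real.pi * Complex.I * t)) *
            circFn g (Gmul (coc θ)
              (Ginv (coc θ) (y, Complex.exp (2 * Real.pi * Complex.I * t))) (x, ξ)))
        = circFn (tconv (coc θ) f g) (x, ξ)) ∧
    -- (b) compatibility with the involution
    (∀ (x : Fin n → ℤ) (ξ : ℂ), ‖ξ‖ = 1 →
      circFn (tinv (coc θ) f) (x, ξ)
        = starRingEnd ℂ (circFn f (Ginv (coc θ) (x, ξ)))) ∧
    -- (c) isometry of the embedding
    (∑' y : Fin n → ℤ, ∫ t in (0:ℝ)..1,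
        ‖circFn f (y, Complex.exp (2 * Real.pi * Complex.I * t))‖)
      = ∑' y : Fin n → ℤ, ‖f y‖ :=
  statement5_general θ hUnit f g
end
end

section
/- Let v : ℤⁿ → [1,∞) be a submultiplicative symmetric weight that violates the GRS-condition, i.e. there exists x ∈ ℤⁿ with lim_{m→∞} v(mx)^{1/m} > 1. Then ℓ¹_v(ℤⁿ, θ) is not inverse-closed in C*(θ): there exists f ∈ ℓ¹_v(ℤⁿ) such that the operator λ(f) : g ↦ f ♮ g is invertible as a bounded operator on ℓ²(ℤⁿ), but there is no g ∈ ℓ¹_v(ℤⁿ) with f ♮ g = g ♮ f = δ_0. -/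
/-!
Pick `x` with `lim v(mx)^{1/m} = L > 1`, a constant `1/L < c < 1`, and put `f = δ₀ - c δₓ`.
On `ℓ²`, `λ(f) = 1 - c Uₓ` where `Uₓ h (y) = σ(x, y - x) h(y - x)` is a contraction, so `λ(f)` is
invertible by a Neumann series. If `f ♮ g = δ₀`, comparing coefficients along `ℤx` gives
`|g(kx)| = c |g((k-1)x)|` for `k ≠ 0` and `g(0) - c σ(x,-x) g(-x) = 1`. If `g(0) ≠ 0` then
`|g(mx)| = cᵐ |g(0)|`, so `g ∈ ℓ¹_v` forces `cᵐ v(mx) → 0`, impossible as `c L > 1`; otherwise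
`g(-x) ≠ 0` and `|g(-mx)|` is nondecreasing in `m`, impossible for a summable `g`.
-/

open scoped BigOperators
open Filter Topology

noncomputable section

/-- ℓ²(ℤⁿ). -/
abbrev Ltwo (n : ℕ) := lp (fun _ : Fin n → ℤ => ℂ) 2

open scoped ENNReal

theorem not_tendsto_pow_mul_zero_of_tendsto_rpow_inv {w : ℕ → ℝ} {L c : ℝ} (hw : ∀ m, 0 ≤ w m)
    (hL : Tendsto (fun m : ℕ => w m ^ (m : ℝ)⁻¹) atTop (𝓝 L)) (hc : 0 ≤ c) (hcL : 1 < c * L) :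
    ¬ Tendsto (fun m => c ^ m * w m) atTop (𝓝 0) := by
  intro h
  have hroot : ∀ᶠ m : ℕ in atTop, c * w m ^ (m : ℝ)⁻¹ ≤ 1 := by
    filter_upwards [h.eventually (gt_mem_nhds one_pos), eventually_ge_atTop 1] with m hm hm1
    rw [← Real.pow_rpow_inv_natCast hc (Nat.one_le_iff_ne_zero.mp hm1),
      ← Real.mul_rpow (by positivity) (hw m)]
    exact Real.rpow_le_one (mul_nonneg (pow_nonneg hc m) (hw m)) hm.le (by positivity)
  linarith [le_of_tendsto (hL.const_mul c) hroot]

section Recurrence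

variable {a : ℤ → ℝ} {r : ℝ}

theorem eq_pow_mul_of_eq_mul_sub_one (h : ∀ k ≠ 0, a k = r * a (k - 1)) (m : ℕ) :
    a m = r ^ m * a 0 := by
  induction m with
  | zero => simp
  | succ m ih =>
    rw [h _ (by omega), Nat.cast_succ, add_sub_cancel_right, ih, pow_succ]
    ring

theorem le_neg_of_eq_mul_sub_one (h : ∀ k ≠ 0, a k = r * a (k - 1)) (ha : ∀ k, 0 ≤ a k)
    (hr : r ≤ 1) (m : ℕ) : a (-1) ≤ a (-(m + 1)) := by
  induction m with
  | zero => simp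
  | succ m ih =>
    calc a (-1) ≤ a (-(m + 1)) := ih
      _ = r * a (-(m + 1) - 1) := h _ (by omega)
      _ ≤ a (-(m + 1) - 1) := mul_le_of_le_one_left (ha _) hr
      _ = a (-((m + 1 : ℕ) + 1)) := by push_cast; ring_nf

end Recurrence

namespace lp

variable {α 𝕜 : Type*} [NontriviallyNormedField 𝕜] {p : ℝ≥0∞}

theorem memℓp_mul_comp_equiv (hp : 0 < p.toReal) {f : α → 𝕜} (hf : Memℓp f p) (φ : α → 𝕜)
    (hφ : ∀ i, ‖φ i‖ ≤ 1) (e : α ≃ α) : Memℓp (fun i => φ i * f (e i)) p :=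
  ((memℓp_gen_iff hp).2 (e.summable_iff.2 ((memℓp_gen_iff hp).1 hf))).mono' fun i => by
    rw [norm_mul]
    exact mul_le_of_le_one_left (norm_nonneg _) (hφ i)

def weightedComp [Fact (1 ≤ p)] (hp : 0 < p.toReal) (φ : α → 𝕜) (hφ : ∀ i, ‖φ i‖ ≤ 1)
    (e : α ≃ α) : lp (fun _ : α => 𝕜) p →L[𝕜] lp (fun _ : α => 𝕜) p :=
  LinearMap.mkContinuous
    { toFun := fun f => ⟨fun i => φ i * f (e i), memℓp_mul_comp_equiv hp (lp.memℓp f) φ hφ e⟩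
      map_add' := fun f g => by ext i; exact mul_add _ _ _
      map_smul' := fun c f => by ext i; exact mul_left_comm _ _ _ }
    1 fun f => by
      rw [one_mul]
      refine lp.norm_le_of_tsum_le hp (norm_nonneg' f) ?_
      calc ∑' i, ‖φ i * f (e i)‖ ^ p.toReal ≤ ∑' i, ‖f (e i)‖ ^ p.toReal := by
            refine Summable.tsum_le_tsum (fun i => ?_)
              ((memℓp_gen_iff hp).1 (memℓp_mul_comp_equiv hp (lp.memℓp f) φ hφ e))
              (e.summable_iff.2 ((lp.memℓp f).summable hp))
            rw [norm_mul]
            gcongr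
            exact mul_le_of_le_one_left (norm_nonneg _) (hφ i)
        _ = ‖f‖ ^ p.toReal := by rw [e.tsum_eq (fun i => ‖f i‖ ^ p.toReal), lp.norm_rpow_eq_tsum hp]

variable [Fact (1 ≤ p)] (hp : 0 < p.toReal) (φ : α → 𝕜) (hφ : ∀ i, ‖φ i‖ ≤ 1) (e : α ≃ α)

theorem norm_weightedComp_le : ‖weightedComp hp φ hφ e‖ ≤ 1 :=
  LinearMap.mkContinuous_norm_le _ zero_le_one _

end lp

section TwistedConvolution

variable {n : ℕ}

theorem norm_coc {θ : Fin n → Fin n → ℂ} (hUnit : ∀ j k, ‖θ j k‖ = 1) (l m : Fin n → ℤ) :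
    ‖coc θ l m‖ = 1 := by
  rw [coc, norm_prod]
  exact Finset.prod_eq_one fun p _ => by rw [norm_zpow, hUnit, one_zpow]

theorem coc_zero_left (θ : Fin n → Fin n → ℂ) (m : Fin n → ℤ) : coc θ 0 m = 1 :=
  Finset.prod_eq_one fun p _ => by simp

theorem tconv_delta_sub_smul_delta {σ : (Fin n → ℤ) → (Fin n → ℤ) → ℂ} (hσ0 : ∀ m, σ 0 m = 1)
    {x : Fin n → ℤ} (hx : x ≠ 0) (c : ℂ) (h : (Fin n → ℤ) → ℂ) (z : Fin n → ℤ) :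
    tconv σ (delta 0 - c • delta x) h z = h z - c * (σ x (z - x) * h (z - x)) := by
  rw [tconv, tsum_eq_sum (s := {0, x}), Finset.sum_pair hx.symm]
  · simp [delta, hx, hx.symm, hσ0]
    ring
  · intro y hy
    simp only [Finset.mem_insert, Finset.mem_singleton, not_or] at hy
    simp [delta, hy.1, hy.2]

theorem exists_continuousLinearEquiv_tconv_delta_sub_smul_delta {θ : Fin n → Fin n → ℂ}
    (hUnit : ∀ j k, ‖θ j k‖ = 1) {x : Fin n → ℤ} (hx : x ≠ 0) {c : ℂ} (hc : ‖c‖ < 1) :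
    ∃ T : Ltwo n ≃L[ℂ] Ltwo n, ∀ (h : Ltwo n) (z : Fin n → ℤ),
      (T h : (Fin n → ℤ) → ℂ) z = tconv (coc θ) (delta 0 - c • delta x) (⇑h) z := by
  set U := lp.weightedComp (p := 2) (by simp) (fun y => coc θ x (y - x))
    (fun y => (norm_coc hUnit x (y - x)).le) (Equiv.subRight x)
  have hcU : ‖c • U‖ < 1 :=
    (norm_smul_le c U).trans_lt (mul_lt_one_of_nonneg_of_lt_one_left (norm_nonneg c) hc
      (lp.norm_weightedComp_le ..))
  refine ⟨ContinuousLinearEquiv.unitsEquiv ℂ _ (Units.oneSub _ hcU), fun h z => ?_⟩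
  rw [tconv_delta_sub_smul_delta (coc_zero_left θ) hx]
  rfl

theorem tendsto_pow_mul_of_tconv_delta_sub_smul_delta_eq_delta
    {σ : (Fin n → ℤ) → (Fin n → ℤ) → ℂ} (hσ0 : ∀ m, σ 0 m = 1) (hσ : ∀ l m, ‖σ l m‖ = 1)
    {x : Fin n → ℤ} (hx : x ≠ 0) {c : ℝ} (hc0 : 0 < c) (hc1 : c < 1)
    {v : (Fin n → ℤ) → ℝ} (hv1 : ∀ x, 1 ≤ v x) {g : (Fin n → ℤ) → ℂ}
    (hg : Summable fun z => ‖g z‖ * v z) (hfg : tconv σ (delta 0 - (c : ℂ) • delta x) g = delta 0) :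
    Tendsto (fun m : ℕ => c ^ m * v (m • x)) atTop (𝓝 0) := by
  have hrel (z) : g z - c * (σ x (z - x) * g (z - x)) = delta 0 z := by
    rw [← tconv_delta_sub_smul_delta hσ0 hx, hfg]
  set a : ℤ → ℝ := fun k => ‖g (k • x)‖
  have hrec : ∀ k ≠ 0, a k = c * a (k - 1) := fun k hk => by
    have := hrel (k • x)
    rw [delta, if_neg (smul_ne_zero hk hx), sub_eq_zero] at this
    change ‖g (k • x)‖ = c * ‖g ((k - 1) • x)‖
    rw [this, sub_one_zsmul, norm_mul, norm_mul, hσ, one_mul, Complex.norm_real,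
      Real.norm_of_nonneg hc0.le, sub_eq_add_neg]
  have hlin := smul_left_injective ℤ hx
  by_cases hg0 : g 0 = 0
  · have hpos : 0 < a (-1) := by
      have := hrel 0
      simp only [delta, if_pos, hg0, zero_sub] at this
      simp only [a, neg_smul, one_smul, norm_pos_iff]
      rintro hgx
      simp [hgx] at this
    have hsum : Summable a :=
      (hg.of_nonneg_of_le (fun _ => norm_nonneg _)
        fun z => le_mul_of_one_le_right (norm_nonneg _) (hv1 z)).comp_injective hlin
    have htend : Tendsto (fun m : ℕ => a (-(m + 1))) atTop (𝓝 0) :=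
      (hsum.comp_injective fun i j hij => by simpa using hij).tendsto_atTop_zero
    exact absurd (ge_of_tendsto' htend
      (le_neg_of_eq_mul_sub_one hrec (fun _ => norm_nonneg _) hc1.le)) hpos.not_ge
  · have htend : Tendsto (fun m : ℕ => a m * v ((m : ℤ) • x)) atTop (𝓝 0) :=
      ((hg.comp_injective hlin).comp_injective Nat.cast_injective).tendsto_atTop_zero
    have hfwd (m : ℕ) : a m = c ^ m * ‖g 0‖ := by
      rw [eq_pow_mul_of_eq_mul_sub_one hrec m]
      simp only [a, zero_smul]
    have := htend.div_const ‖g 0‖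
    rw [zero_div] at this
    refine this.congr fun m => ?_
    rw [hfwd, natCast_zsmul]
    field_simp [norm_ne_zero_iff.2 hg0]

end TwistedConvolution

theorem statement8_general {n : ℕ} (θ : Fin n → Fin n → ℂ)
    (hUnit : ∀ j k, ‖θ j k‖ = 1)
    (v : (Fin n → ℤ) → ℝ)
    (hv1 : ∀ x, 1 ≤ v x)
    (hGRSfail : ∃ (x : Fin n → ℤ) (L : ℝ), 1 < L ∧
      Filter.Tendsto (fun m : ℕ => (v (m • x)) ^ ((m : ℝ)⁻¹)) atTop (𝓝 L)) :
    ∃ f : (Fin n → ℤ) → ℂ, Summable (fun x => ‖f x‖ * v x) ∧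
      (∃ T : Ltwo n ≃L[ℂ] Ltwo n,
        ∀ (h : Ltwo n) (x : Fin n → ℤ),
          (T h : (Fin n → ℤ) → ℂ) x = tconv (coc θ) f (⇑h) x) ∧
      ¬ ∃ g : (Fin n → ℤ) → ℂ, Summable (fun x => ‖g x‖ * v x) ∧
          tconv (coc θ) f g = delta 0 ∧ tconv (coc θ) g f = delta 0 := by
  obtain ⟨x, L, hL1, hL⟩ := hGRSfail
  obtain ⟨c, hLc, hc1⟩ := exists_between (inv_lt_one_of_one_lt₀ hL1)
  have hc0 : 0 < c := (inv_pos.2 (zero_lt_one.trans hL1)).trans hLc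
  have hcL : 1 < c * L := by rwa [inv_lt_iff_one_lt_mul₀ (zero_lt_one.trans hL1)] at hLc
  have hv0 (m : ℕ) : 0 ≤ v (m • x) := zero_le_one.trans (hv1 _)
  have hx : x ≠ 0 := by
    rintro rfl
    refine not_tendsto_pow_mul_zero_of_tendsto_rpow_inv hv0 hL hc0.le hcL ?_
    simpa using (tendsto_pow_atTop_nhds_zero_of_lt_one hc0.le hc1).mul_const (v 0)
  refine ⟨delta 0 - (c : ℂ) • delta x, ?_, ?_, ?_⟩
  · refine summable_of_ne_finset_zero (s := {0, x}) fun y hy => ?_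
    simp only [Finset.mem_insert, Finset.mem_singleton, not_or] at hy
    simp [delta, hy.1, hy.2]
  · exact exists_continuousLinearEquiv_tconv_delta_sub_smul_delta hUnit hx
      (by rwa [Complex.norm_real, Real.norm_of_nonneg hc0.le])
  · rintro ⟨g, hg, hfg, -⟩
    exact not_tendsto_pow_mul_zero_of_tendsto_rpow_inv hv0 hL hc0.le hcL
      (tendsto_pow_mul_of_tconv_delta_sub_smul_delta_eq_delta (coc_zero_left θ) (norm_coc hUnit)
        hx hc0 hc1 hv1 hg hfg)

/-- if the submultiplicative symmetric weight v violates the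
GRS-condition (there is x with lim_m v(mx)^{1/m} > 1), then ℓ¹_v(ℤⁿ, θ) is not
inverse-closed in C*(θ): some f ∈ ℓ¹_v has λ(f) invertible as a bounded operator
on ℓ²(ℤⁿ) but has no two-sided ♮-inverse in ℓ¹_v. -/
theorem statement8 {n : ℕ} (θ : Fin n → Fin n → ℂ)
    (hUnit : ∀ j k, ‖θ j k‖ = 1)
    (hHerm : ∀ j k, θ k j = starRingEnd ℂ (θ j k))
    (hDiag : ∀ j, θ j j = 1)
    (v : (Fin n → ℤ) → ℝ)
    (hv1 : ∀ x, 1 ≤ v x)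
    (hvsub : ∀ x y, v (x + y) ≤ v x * v y)
    (hvsymm : ∀ x, v (-x) = v x)
    (hGRSfail : ∃ (x : Fin n → ℤ) (L : ℝ), 1 < L ∧
      Filter.Tendsto (fun m : ℕ => (v (m • x)) ^ ((m : ℝ)⁻¹)) atTop (𝓝 L)) :
    ∃ f : (Fin n → ℤ) → ℂ, Summable (fun x => ‖f x‖ * v x) ∧
      (∃ T : Ltwo n ≃L[ℂ] Ltwo n,
        ∀ (h : Ltwo n) (x : Fin n → ℤ),
          (T h : (Fin n → ℤ) → ℂ) x = tconv (coc θ) f (⇑h) x) ∧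
      ¬ ∃ g : (Fin n → ℤ) → ℂ, Summable (fun x => ‖g x‖ * v x) ∧
          tconv (coc θ) f g = delta 0 ∧ tconv (coc θ) g f = delta 0 :=
  statement8_general θ hUnit v hv1 hGRSfail
end
end

section
/- Let m ∈ ℤⁿ and let e_1, …, e_n be the standard basis of ℤⁿ. The following are equivalent: (i) δ_m is central in ℓ¹(ℤⁿ, θ), i.e. δ_m ♮ f = f ♮ δ_m for all f ∈ ℓ¹(ℤⁿ); (ii) σ(m, e_j) = σ(e_j, m) for every j = 1, …, n; (iii) ∏_{j=1}^n θ_{jk}^{m_j} = 1 for every k = 1, …, n. -/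
/-!
Both sides of `δ_m ♮ f = f ♮ δ_m` are shifts of `f` by `m`, twisted by `σ(m, ·)` and `σ(·, m)`
respectively, so `δ_m` is central iff `σ(m, z) = σ(z, m)` for all `z` (test against `f = δ_z`).
Since `θ_{kj} = θ_{jk}⁻¹` and `θ_{jj} = 1`, the quotient `σ(m, z) σ(z, m)⁻¹` collapses to the full
product `∏_{j,k} θ_{kj}^{m_k z_j}`, a character in `z` whose value at `e_k` is `∏_j θ_{jk}^{m_j}`.
-/

open scoped BigOperators
open Filter Topology

noncomputable section

open Finset

section TwistedConvolution

variable {n : ℕ} (σ : (Fin n → ℤ) → (Fin n → ℤ) → ℂ) (m : Fin n → ℤ)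

lemma tconv_delta_left (f : (Fin n → ℤ) → ℂ) (x : Fin n → ℤ) :
    tconv σ (delta m) f x = f (x - m) * σ m (x - m) := by
  rw [tconv, tsum_eq_single m fun y hy => by simp [delta, hy]]
  simp [delta]

lemma tconv_delta_right (f : (Fin n → ℤ) → ℂ) (x : Fin n → ℤ) :
    tconv σ f (delta m) x = f (x - m) * σ (x - m) m := by
  rw [tconv, tsum_eq_single (x - m) fun y hy => by
    have : x - y ≠ m := fun h => hy (by rw [← h]; abel)
    simp [delta, this]]
  simp [delta]

lemma summable_norm_delta (z : Fin n → ℤ) : Summable fun x => ‖delta z x‖ :=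
  summable_of_ne_finset_zero (s := {z}) fun x hx => by
    simp [delta, mem_singleton.not.mp hx]

lemma tconv_delta_comm_iff :
    (∀ f : (Fin n → ℤ) → ℂ, Summable (fun x => ‖f x‖) →
        tconv σ (delta m) f = tconv σ f (delta m)) ↔ ∀ z, σ m z = σ z m := by
  refine ⟨fun h z => ?_, fun h f _ => funext fun x => ?_⟩
  · have := congrFun (h (delta z) (summable_norm_delta z)) (z + m)
    simpa [tconv_delta_left, tconv_delta_right, delta] using this
  · rw [tconv_delta_left, tconv_delta_right, h]

end TwistedConvolution

section Cocycle

variable {n : ℕ} {θ : Fin n → Fin n → ℂ}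

lemma coc_ne_zero (hinv : ∀ j k, θ j k * θ k j = 1) (l m : Fin n → ℤ) : coc θ l m ≠ 0 :=
  prod_ne_zero_iff.mpr fun p _ => zpow_ne_zero _ (left_ne_zero_of_mul_eq_one (hinv p.2 p.1))

lemma inv_coc_eq_prod_lt (hinv : ∀ j k, θ j k * θ k j = 1) (m z : Fin n → ℤ) :
    (coc θ z m)⁻¹ = ∏ p ∈ univ.filter (fun p : Fin n × Fin n => p.2 < p.1),
      θ p.2 p.1 ^ (m p.2 * z p.1) := by
  rw [coc, ← prod_inv_distrib]
  refine prod_equiv (Equiv.prodComm _ _) (by simp) fun p _ => ?_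
  rw [Equiv.prodComm_apply, Prod.fst_swap, Prod.snd_swap, ← inv_zpow,
    inv_eq_of_mul_eq_one_right (hinv p.2 p.1), mul_comm]

lemma coc_mul_inv_coc_swap (hinv : ∀ j k, θ j k * θ k j = 1) (hDiag : ∀ j, θ j j = 1)
    (m z : Fin n → ℤ) :
    coc θ m z * (coc θ z m)⁻¹ = ∏ j, (∏ k, θ k j ^ m k) ^ z j := by
  have hdisj : Disjoint (univ.filter fun p : Fin n × Fin n => p.1 < p.2)
      (univ.filter fun p : Fin n × Fin n => p.2 < p.1) :=
    disjoint_filter.mpr fun p _ h h' => lt_asymm h h'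
  rw [coc, inv_coc_eq_prod_lt hinv, ← prod_union hdisj,
    prod_subset (subset_univ _) fun p _ hp => ?diag, Fintype.prod_prod_type]
  case diag =>
    simp only [mem_union, mem_filter, mem_univ, true_and, not_or, not_lt] at hp
    rw [le_antisymm hp.2 hp.1, hDiag, one_zpow]
  refine prod_congr rfl fun j _ => ?_
  rw [← prod_zpow]
  exact prod_congr rfl fun k _ => zpow_mul _ _ _

lemma coc_eq_coc_swap_iff (hinv : ∀ j k, θ j k * θ k j = 1) (hDiag : ∀ j, θ j j = 1)
    (m z : Fin n → ℤ) :
    coc θ m z = coc θ z m ↔ ∏ j, (∏ k, θ k j ^ m k) ^ z j = 1 := by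
  rw [← coc_mul_inv_coc_swap hinv hDiag, mul_inv_eq_one₀ (coc_ne_zero hinv z m)]

lemma coc_single_eq_iff (hinv : ∀ j k, θ j k * θ k j = 1) (hDiag : ∀ j, θ j j = 1)
    (m : Fin n → ℤ) (k : Fin n) :
    coc θ m (Pi.single k 1) = coc θ (Pi.single k 1) m ↔ ∏ j, θ j k ^ m j = 1 := by
  rw [coc_eq_coc_swap_iff hinv hDiag,
    prod_eq_single k (fun j _ hj => by simp [hj]) (by simp)]
  simp

end Cocycle

/-- for m ∈ ℤⁿ the following are equivalent:
(i) δ_m is central in ℓ¹(ℤⁿ, θ);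
(ii) σ(m, e_j) = σ(e_j, m) for all j;
(iii) ∏_{j=1}^n θ_{jk}^{m_j} = 1 for all k. -/
theorem statement10 {n : ℕ} (θ : Fin n → Fin n → ℂ)
    (hUnit : ∀ j k, ‖θ j k‖ = 1)
    (hHerm : ∀ j k, θ k j = starRingEnd ℂ (θ j k))
    (hDiag : ∀ j, θ j j = 1)
    (m : Fin n → ℤ) :
    ((∀ f : (Fin n → ℤ) → ℂ, Summable (fun x => ‖f x‖) →
        tconv (coc θ) (delta m) f = tconv (coc θ) f (delta m))
      ↔ (∀ j : Fin n,
          coc θ m (Pi.single j (1 : ℤ)) = coc θ (Pi.single j (1 : ℤ)) m)) ∧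
    ((∀ j : Fin n,
        coc θ m (Pi.single j (1 : ℤ)) = coc θ (Pi.single j (1 : ℤ)) m)
      ↔ (∀ k : Fin n, (∏ j : Fin n, θ j k ^ (m j)) = 1)) := by
  have hinv : ∀ j k, θ j k * θ k j = 1 := fun j k => by
    rw [hHerm j k, Complex.mul_conj', hUnit]
    norm_num
  have hsingle := forall_congr' (coc_single_eq_iff hinv hDiag m)
  refine ⟨(tconv_delta_comm_iff _ m).trans ⟨fun h j => h _, fun h z => ?_⟩, hsingle⟩
  exact (coc_eq_coc_swap_iff hinv hDiag m z).mpr <|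
    prod_eq_one fun j _ => by rw [hsingle.mp h j, one_zpow]
end
end

section
/- Let f : ℤⁿ → ℂ be rapidly decreasing, i.e. for every s ≥ 0 one has sup_{x ∈ ℤⁿ} |f(x)| (1 + |x|)^s < ∞ (|·| the Euclidean norm). If the operator λ(f) : g ↦ f ♮ g is invertible as a bounded operator on ℓ²(ℤⁿ), then there exists a rapidly decreasing g : ℤⁿ → ℂ with f ♮ g = g ♮ f = δ_0. (That is, the smooth non-commutative torus S(ℤⁿ, θ) of rapidly decreasing sequences is inverse-closed in C*(θ).) -/
open scoped BigOperators
open Filter Topology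

noncomputable section

/-- The Euclidean norm of a point of ℤⁿ. -/
def enorm' {n : ℕ} (x : Fin n → ℤ) : ℝ :=
  Real.sqrt (∑ i : Fin n, ((x i : ℝ)) ^ 2)

/-- f is rapidly decreasing: sup_x |f(x)| (1+|x|)^s < ∞ for every s ≥ 0. -/
def RapidDecay {n : ℕ} (f : (Fin n → ℤ) → ℂ) : Prop :=
  ∀ s : ℝ, 0 ≤ s → ∃ C : ℝ, ∀ x : Fin n → ℤ, ‖f x‖ * (1 + enorm' x) ^ s ≤ C

/-
For `g := T⁻¹ δ₀` one has `f ♮ g = T g = δ₀` at once. The twisted right translations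
`h ↦ h ♮ δ_z` commute with `T = λ(f)`, hence so does `h ↦ h ♮ f = ∑_z f(z) (h ♮ δ_z)`; it maps
`δ₀` to `f = T δ₀`, and applying `T⁻¹` gives `g ♮ f = δ₀`.

For the decay of `g`, conjugate by the modulations `Mₜ h = e^{i⟨·,t⟩} h`, `t ∈ ℝⁿ`:
`Mₜ T Mₜ⁻¹ = ∑_y e^{i⟨y,t⟩} f(y) λ(δ_y)` is a smooth function of `t` because `f` decays rapidly,
and inversion is smooth on invertible operators, so `t ↦ Mₜ T⁻¹ Mₜ⁻¹ δ₀ = Mₜ g` is a smooth curve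
in `ℓ²`. Differentiating in `tⱼ` multiplies the coordinates by `i xⱼ`, so every
`(1 + |x|²)ᵐ g` lies in `ℓ² ⊆ ℓ^∞`.
-/

open Complex
open scoped ContDiff ENNReal

namespace NoncommTorus

variable {n : ℕ}

section Cocycle

variable {θ : Fin n → Fin n → ℂ}

theorem norm_coc (hθ : ∀ j k, ‖θ j k‖ = 1) (l m : Fin n → ℤ) : ‖coc θ l m‖ = 1 := by
  simp [coc, norm_prod, hθ]

theorem coc_add_left (hθ : ∀ j k, θ j k ≠ 0) (l l' m : Fin n → ℤ) :
    coc θ (l + l') m = coc θ l m * coc θ l' m := by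
  simp only [coc, ← Finset.prod_mul_distrib, Pi.add_apply, add_mul, zpow_add₀ (hθ _ _)]

theorem coc_add_right (hθ : ∀ j k, θ j k ≠ 0) (l m m' : Fin n → ℤ) :
    coc θ l (m + m') = coc θ l m * coc θ l m' := by
  simp only [coc, ← Finset.prod_mul_distrib, Pi.add_apply, mul_add, zpow_add₀ (hθ _ _)]

theorem coc_zero_left (m : Fin n → ℤ) : coc θ 0 m = 1 := by
  simp [coc]

theorem coc_zero_right (l : Fin n → ℤ) : coc θ l 0 = 1 := by
  simp [coc]

end Cocycle

section TwistedConvolution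

variable {σ : (Fin n → ℤ) → (Fin n → ℤ) → ℂ}

theorem tconv_delta_right (hσ : ∀ y, σ y 0 = 1) (f : (Fin n → ℤ) → ℂ) :
    tconv σ f (delta 0) = f := by
  funext x
  rw [tconv, tsum_eq_single x fun y hy => by simp [delta, sub_eq_zero, Ne.symm hy]]
  simp [delta, hσ]

theorem tconv_delta_left (hσ : ∀ y, σ 0 y = 1) (f : (Fin n → ℤ) → ℂ) :
    tconv σ (delta 0) f = f := by
  funext x
  rw [tconv, tsum_eq_single 0 fun y hy => by simp [delta, hy]]
  simp [delta, hσ]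

theorem tconv_eq_tsum_sub (f h : (Fin n → ℤ) → ℂ) (x : Fin n → ℤ) :
    tconv σ h f x = ∑' z, f z * σ (x - z) z * h (x - z) := by
  rw [tconv, ← (Equiv.subLeft x).tsum_eq]
  exact tsum_congr fun z => by simp only [Equiv.subLeft_apply, sub_sub_cancel]; ring

theorem tconv_mul_char {χ : (Fin n → ℤ) → ℂ} (hχ : ∀ a b, χ (a + b) = χ a * χ b)
    (f h : (Fin n → ℤ) → ℂ) (x : Fin n → ℤ) :
    tconv σ (fun y => χ y * f y) (fun y => χ y * h y) x = χ x * tconv σ f h x := by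
  rw [tconv, tconv, ← tsum_mul_left]
  refine tsum_congr fun y => ?_
  rw [show χ x = χ y * χ (x - y) by rw [← hχ, add_sub_cancel]]
  ring

theorem tconv_right_translate (hl : ∀ a b c, σ (a + b) c = σ a c * σ b c)
    (hr : ∀ a b c, σ a (b + c) = σ a b * σ a c) (f h : (Fin n → ℤ) → ℂ) (z x : Fin n → ℤ) :
    tconv σ f (fun w => σ (w - z) z * h (w - z)) x = σ (x - z) z * tconv σ f h (x - z) := by
  rw [tconv, tconv, ← tsum_mul_left]
  refine tsum_congr fun y => ?_
  rw [sub_right_comm x z y,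
    show σ (x - z) z = σ (x - y - z) z * σ y z by rw [← hl]; congr 1; abel,
    show σ y (x - y) = σ y (x - y - z) * σ y z by rw [← hr]; congr 1; abel]
  ring

end TwistedConvolution

section WeightedShift

local notation "ℓ²(" G ")" => lp (fun _ : G => ℂ) 2

variable {G : Type*}

theorem lp_tsum_apply {ι : Type*} {v : ι → ℓ²(G)} (hv : Summable v) (x : G) :
    (∑' i, v i) x = ∑' i, v i x :=
  (lp.evalCLM ℂ (fun _ : G => ℂ) 2 x).map_tsum hv

theorem tsum_clm_apply_apply {ι : Type*} {A : ι → ℓ²(G) →L[ℂ] ℓ²(G)} (hA : Summable A)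
    (h : ℓ²(G)) (x : G) : (∑' i, A i) h x = ∑' i, A i h x :=
  (congrArg (fun v : ℓ²(G) => v x) ((ContinuousLinearMap.apply ℂ _ h).map_tsum hA)).trans
    (lp_tsum_apply (hA.mapL (ContinuousLinearMap.apply ℂ _ h)) x)

theorem summable_smul_of_norm_le_one {ι V : Type*} [NormedAddCommGroup V] [NormedSpace ℂ V]
    [CompleteSpace V] {c : ι → ℂ} (hc : Summable fun i => ‖c i‖) {v : ι → V}
    (hv : ∀ i, ‖v i‖ ≤ 1) : Summable fun i => c i • v i :=
  hc.of_norm_bounded fun i =>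
    (norm_smul_le _ _).trans (mul_le_of_le_one_right (norm_nonneg _) (hv i))

variable [AddGroup G]

theorem memℓp_two_comp_sub (h : ℓ²(G)) (y : G) : Memℓp (fun x => h (x - y)) 2 := by
  have hs := (lp.memℓp h).summable (p := 2) (by norm_num)
  rw [memℓp_gen_iff (by norm_num)]
  exact (Equiv.subRight y).summable_iff.2 hs

theorem memℓp_two_mul_comp_sub {w : G → ℂ} (hw : ∀ x, ‖w x‖ ≤ 1) (h : ℓ²(G)) (y : G) :
    Memℓp (fun x => w x * h (x - y)) 2 :=
  (memℓp_two_comp_sub h y).mono' fun x => (norm_mul_le_of_le (hw x) le_rfl).trans_eq (one_mul _)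

def weightedShift (y : G) (w : G → ℂ) (hw : ∀ x, ‖w x‖ ≤ 1) : ℓ²(G) →L[ℂ] ℓ²(G) :=
  LinearMap.mkContinuous
    { toFun := fun h => ⟨fun x => w x * h (x - y), memℓp_two_mul_comp_sub hw h y⟩
      map_add' := fun a b => lp.ext <| funext fun x => by simp [mul_add]; rfl
      map_smul' := fun c a => lp.ext <| funext fun x => by simp [mul_left_comm] }
    1 fun h => by
      have hp : 0 < (2 : ℝ≥0∞).toReal := by norm_num
      rw [one_mul]
      refine lp.norm_le_of_tsum_le hp (norm_nonneg h) ?_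
      calc ∑' x, ‖w x * h (x - y)‖ ^ (2 : ℝ≥0∞).toReal
          ≤ ∑' x, ‖h (x - y)‖ ^ (2 : ℝ≥0∞).toReal :=
            Summable.tsum_le_tsum
              (fun x => by gcongr; exact (norm_mul_le_of_le (hw x) le_rfl).trans_eq (one_mul _))
              ((memℓp_two_mul_comp_sub hw h y).summable hp) ((memℓp_two_comp_sub h y).summable hp)
        _ = ‖h‖ ^ (2 : ℝ≥0∞).toReal := by
            rw [lp.norm_rpow_eq_tsum hp]
            exact (Equiv.subRight y).tsum_eq fun x => ‖h x‖ ^ (2 : ℝ≥0∞).toReal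

variable (y : G) (w : G → ℂ) (hw : ∀ x, ‖w x‖ ≤ 1)

@[simp]
theorem weightedShift_apply (h : ℓ²(G)) (x : G) : weightedShift y w hw h x = w x * h (x - y) :=
  rfl

theorem norm_weightedShift_le : ‖weightedShift y w hw‖ ≤ 1 :=
  LinearMap.mkContinuous_norm_le _ zero_le_one _

end WeightedShift

section PhaseSeries

universe u

-- `E` and `W` share a universe so that the induction below can pass from `W` to `E →L[ℝ] W`.
variable {ι : Type*} {E : Type u} [NormedAddCommGroup E] [NormedSpace ℝ E]

theorem hasFDerivAt_exp_mul_I (φ : E →L[ℝ] ℝ) (t : E) :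
    HasFDerivAt (fun s => exp (φ s * I)) (exp (φ t * I) • I • ofRealCLM.comp φ) t :=
  (((ofRealCLM.comp φ).hasFDerivAt (x := t)).mul_const I).cexp

variable {W : Type u} [NormedAddCommGroup W] [NormedSpace ℂ W] [CompleteSpace W]

theorem hasFDerivAt_tsum_exp_mul_I_smul (φ : ι → E →L[ℝ] ℝ) (c : ι → W)
    (h0 : Summable fun i => ‖c i‖) (h1 : Summable fun i => ‖c i‖ * ‖φ i‖) (t : E) :
    HasFDerivAt (fun s => ∑' i, exp (φ i s * I) • c i)
      (∑' i, exp (φ i t * I) • (φ i).smulRight (I • c i)) t := by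
  have hterm : ∀ i s, HasFDerivAt (fun s => exp (φ i s * I) • c i)
      (exp (φ i s * I) • (φ i).smulRight (I • c i)) s := fun i s => by
    refine ((hasFDerivAt_exp_mul_I (φ i) s).smul_const (c i)).congr_fderiv
      (ContinuousLinearMap.ext fun v => ?_)
    simp only [ContinuousLinearMap.smulRight_apply, FunLike.coe_smul, Pi.smul_apply,
      ContinuousLinearMap.comp_apply, ofRealCLM_apply]
    module
  have hbound : ∀ i s, ‖exp (φ i s * I) • (φ i).smulRight (I • c i)‖ ≤ ‖c i‖ * ‖φ i‖ :=
    fun i s => by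
      rw [norm_smul, norm_exp_ofReal_mul_I, one_mul, ContinuousLinearMap.norm_smulRight_apply,
        norm_smul, norm_I, one_mul, mul_comm]
  have hsum0 : Summable fun i => exp (φ i 0 * I) • c i :=
    h0.of_norm_bounded fun i => by simp
  exact hasFDerivAt_tsum h1 hterm hbound hsum0 t

theorem contDiff_tsum_exp_mul_I_smul (φ : ι → E →L[ℝ] ℝ) (c : ι → W)
    (hc : ∀ k : ℕ, Summable fun i => ‖c i‖ * ‖φ i‖ ^ k) :
    ContDiff ℝ ∞ fun t => ∑' i, exp (φ i t * I) • c i := by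
  refine contDiff_infty.2 fun k => ?_
  induction k generalizing W with
  | zero =>
    refine contDiff_zero.2 (continuous_iff_continuousAt.2 fun t => ?_)
    exact (hasFDerivAt_tsum_exp_mul_I_smul φ c (by simpa using hc 0) (by simpa using hc 1)
      t).continuousAt
  | succ k ih =>
    have hc' : ∀ k : ℕ, Summable fun i => ‖(φ i).smulRight (I • c i)‖ * ‖φ i‖ ^ k := fun k =>
      (hc (k + 1)).congr fun i => by
        rw [ContinuousLinearMap.norm_smulRight_apply, norm_smul, norm_I, one_mul]; ring
    exact contDiff_succ_iff_hasFDerivAt.2 ⟨_, ih _ hc',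
      hasFDerivAt_tsum_exp_mul_I_smul φ c (by simpa using hc 0) (by simpa using hc 1)⟩

end PhaseSeries

theorem enorm'_nonneg (y : Fin n → ℤ) : 0 ≤ enorm' y :=
  Real.sqrt_nonneg _

theorem abs_le_enorm' (y : Fin n → ℤ) (i : Fin n) : |(y i : ℝ)| ≤ enorm' y := by
  rw [enorm', ← Real.sqrt_sq_eq_abs]
  exact Real.sqrt_le_sqrt
    (Finset.single_le_sum (fun j _ => sq_nonneg (y j : ℝ)) (Finset.mem_univ i))

theorem summable_inv_one_add_abs_sq : Summable fun r : ℤ => ((1 + |(r : ℝ)|) ^ 2)⁻¹ := by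
  refine (Real.summable_one_div_int_pow.2 one_lt_two).of_norm_bounded_eventually ?_
  filter_upwards [eventually_cofinite_ne 0] with r hr
  have : (0 : ℝ) < |(r : ℝ)| := by positivity
  rw [Real.norm_of_nonneg (by positivity), one_div, ← sq_abs (r : ℝ)]
  exact inv_anti₀ (pow_pos this 2) (by gcongr; linarith)

theorem summable_prod_apply {α : Type*} {g : α → ℝ} (hg₀ : ∀ a, 0 ≤ g a) (hg : Summable g) :
    ∀ n, Summable fun y : Fin n → α => ∏ i, g (y i)
  | 0 => .of_finite
  | n + 1 => by
    rw [← (Fin.consEquiv fun _ : Fin (n + 1) => α).summable_iff]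
    refine (hg.mul_of_nonneg (summable_prod_apply hg₀ hg n) hg₀
      fun y => Finset.prod_nonneg fun i _ => hg₀ _).congr fun p => ?_
    simp [Fin.consEquiv, Fin.prod_univ_succ]

theorem _root_.RapidDecay.summable_norm_mul_pow {f : (Fin n → ℤ) → ℂ} (hf : RapidDecay f)
    (k : ℕ) : Summable fun y => ‖f y‖ * (1 + enorm' y) ^ k := by
  -- `(1 + |y|)⁻²ⁿ ≤ ∏ᵢ (1 + |yᵢ|)⁻²`, a product of summable one-dimensional weights
  obtain ⟨C, hC⟩ := hf (k + 2 * n : ℕ) (Nat.cast_nonneg _)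
  refine ((summable_prod_apply (fun r => by positivity) summable_inv_one_add_abs_sq n).mul_left
    C).of_nonneg_of_le (fun y => ?_) fun y => ?_
  · have := enorm'_nonneg y
    positivity
  have := enorm'_nonneg y
  have hprod : ∏ i, (1 + |(y i : ℝ)|) ^ 2 ≤ (1 + enorm' y) ^ (2 * n) := by
    rw [pow_mul, ← Fin.prod_const]
    exact Finset.prod_le_prod (fun i _ => by positivity)
      fun i _ => by gcongr; exact abs_le_enorm' y i
  rw [Finset.prod_inv_distrib, ← div_eq_mul_inv, le_div_iff₀ (by positivity)]
  calc ‖f y‖ * (1 + enorm' y) ^ k * ∏ i, (1 + |(y i : ℝ)|) ^ 2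
      ≤ ‖f y‖ * (1 + enorm' y) ^ k * (1 + enorm' y) ^ (2 * n) := by gcongr
    _ = ‖f y‖ * (1 + enorm' y) ^ (k + 2 * n : ℕ) := by rw [pow_add, mul_assoc]
    _ ≤ C := by rw [← Real.rpow_natCast]; exact hC y

def pairing : (Fin n → ℤ) →+ ((Fin n → ℝ) →L[ℝ] ℝ) where
  toFun y := ∑ m, (y m : ℝ) • ContinuousLinearMap.proj m
  map_zero' := by simp
  map_add' a b := by simp [add_smul, Finset.sum_add_distrib]

theorem pairing_apply (y : Fin n → ℤ) (t : Fin n → ℝ) : pairing y t = ∑ m, (y m : ℝ) * t m := by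
  simp [pairing]

theorem pairing_single (y : Fin n → ℤ) (j : Fin n) : pairing y (Pi.single j 1) = y j := by
  simp [pairing_apply, Pi.single_apply]

theorem norm_pairing_le (y : Fin n → ℤ) : ‖pairing y‖ ≤ n * enorm' y := by
  refine ContinuousLinearMap.opNorm_le_bound _ (by have := enorm'_nonneg y; positivity) fun t => ?_
  rw [pairing_apply]
  calc ‖∑ m, (y m : ℝ) * t m‖ ≤ ∑ m, ‖(y m : ℝ) * t m‖ := norm_sum_le _ _
    _ ≤ ∑ _m : Fin n, enorm' y * ‖t‖ := Finset.sum_le_sum fun m _ => by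
        rw [norm_mul, Real.norm_eq_abs]
        exact mul_le_mul (abs_le_enorm' y m) (norm_le_pi_norm t m) (norm_nonneg _)
          (enorm'_nonneg y)
    _ = n * enorm' y * ‖t‖ := by simp [mul_assoc]

def character (t : Fin n → ℝ) (x : Fin n → ℤ) : ℂ := exp (pairing x t * I)

theorem norm_character (t : Fin n → ℝ) (x : Fin n → ℤ) : ‖character t x‖ = 1 :=
  norm_exp_ofReal_mul_I _

theorem character_add (t : Fin n → ℝ) (a b : Fin n → ℤ) :
    character t (a + b) = character t a * character t b := by
  simp [character, add_mul, exp_add]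

theorem character_neg_mul (t : Fin n → ℝ) (x : Fin n → ℤ) :
    character (-t) x * character t x = 1 := by
  simp [character, ← exp_add]

@[simp]
theorem character_zero_left (x : Fin n → ℤ) : character 0 x = 1 := by
  simp [character]

@[simp]
theorem character_zero_right (t : Fin n → ℝ) : character t 0 = 1 := by
  simp [character]

variable (n) in
/-- Smooth vectors of the modulation action of `ℝⁿ` on `ℓ²(ℤⁿ)`. -/
def smoothVectors : Submodule ℂ ((Fin n → ℤ) → ℂ) where
  carrier := {h | ∃ u : (Fin n → ℝ) → Ltwo n, ContDiff ℝ ∞ u ∧ ∀ t x, u t x = character t x * h x}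
  add_mem' := by
    rintro h₁ h₂ ⟨u₁, hu₁, hc₁⟩ ⟨u₂, hu₂, hc₂⟩
    exact ⟨u₁ + u₂, hu₁.add hu₂, fun t x => by simp [hc₁, hc₂, mul_add]⟩
  zero_mem' := ⟨0, contDiff_const, fun t x => by simp⟩
  smul_mem' := by
    rintro a h ⟨u, hu, hc⟩
    exact ⟨a • u, hu.const_smul a, fun t x => by simp [hc, mul_left_comm]⟩

theorem exists_norm_le_of_mem_smoothVectors {h : (Fin n → ℤ) → ℂ} (hh : h ∈ smoothVectors n) :
    ∃ C, ∀ x, ‖h x‖ ≤ C := by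
  obtain ⟨u, -, hc⟩ := hh
  exact ⟨‖u 0‖, fun x => by simpa [hc] using lp.norm_apply_le_norm two_ne_zero (u 0) x⟩

theorem coord_mul_mem_smoothVectors (j : Fin n) {h : (Fin n → ℤ) → ℂ} (hh : h ∈ smoothVectors n) :
    (fun x => (x j : ℂ) * h x) ∈ smoothVectors n := by
  obtain ⟨u, hu, hc⟩ := hh
  refine ⟨fun t => (-I) • fderiv ℝ u t (Pi.single j 1),
    ((hu.fderiv_right (by exact_mod_cast le_top)).clm_apply contDiff_const).const_smul _,
    fun t x => ?_⟩
  have hd : HasFDerivAt (fun s => u s x)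
      (((lp.evalCLM ℂ (fun _ : Fin n → ℤ => ℂ) 2 x).restrictScalars ℝ).comp (fderiv ℝ u t)) t :=
    ((lp.evalCLM ℂ _ 2 x).restrictScalars ℝ).hasFDerivAt.comp t
      (hu.differentiable (by simp) t).hasFDerivAt
  have hd' : HasFDerivAt (fun s => u s x)
      ((character t x • I • ofRealCLM.comp (pairing x)).smulRight (h x)) t := by
    simp only [hc]
    exact (hasFDerivAt_exp_mul_I (pairing x) t).smul_const (h x)
  -- the `x`-coordinate of `∂ⱼ u t` is `∂ⱼ (character t x) * h x = i xⱼ character t x * h x`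
  have hcoord := congrArg (· (Pi.single j 1)) (hd.unique hd')
  simp only [ContinuousLinearMap.comp_apply, ContinuousLinearMap.coe_restrictScalars',
    ContinuousLinearMap.smulRight_apply, FunLike.coe_smul, Pi.smul_apply, ofRealCLM_apply,
    pairing_single, smul_eq_mul] at hcoord
  change -I * lp.evalCLM ℂ _ 2 x (fderiv ℝ u t (Pi.single j 1)) = _
  rw [hcoord]
  linear_combination (-(character t x * x j * h x)) * I_sq

theorem weight_pow_mul_mem_smoothVectors (m : ℕ) {h : (Fin n → ℤ) → ℂ}
    (hh : h ∈ smoothVectors n) :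
    (fun x => ((1 + ∑ i, (x i : ℝ) ^ 2 : ℝ) : ℂ) ^ m * h x) ∈ smoothVectors n := by
  induction m with
  | zero => simpa using hh
  | succ m ih =>
    have hsum := add_mem ih (Submodule.sum_mem _ (t := Finset.univ) fun i _ =>
      coord_mul_mem_smoothVectors i (coord_mul_mem_smoothVectors i ih))
    convert hsum using 1
    funext x
    simp only [Pi.add_apply, Finset.sum_apply]
    push_cast
    simp only [← mul_assoc, ← pow_two, ← Finset.sum_mul]
    ring

theorem rapidDecay_of_forall_weight_pow_mul_le {g : (Fin n → ℤ) → ℂ}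
    (hg : ∀ m : ℕ, ∃ C, ∀ x, (1 + ∑ i, (x i : ℝ) ^ 2) ^ m * ‖g x‖ ≤ C) : RapidDecay g := by
  intro s hs
  obtain ⟨C, hC⟩ := hg ⌈s⌉₊
  refine ⟨2 ^ ⌈s⌉₊ * C, fun x => ?_⟩
  have he := enorm'_nonneg x
  have hsq : enorm' x ^ 2 = ∑ i, (x i : ℝ) ^ 2 :=
    Real.sq_sqrt (Finset.sum_nonneg fun i _ => sq_nonneg _)
  calc ‖g x‖ * (1 + enorm' x) ^ s ≤ ‖g x‖ * ((1 + enorm' x) ^ 2) ^ ⌈s⌉₊ := by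
        gcongr
        rw [← pow_mul, ← Real.rpow_natCast]
        exact Real.rpow_le_rpow_of_exponent_le (by linarith)
          (by push_cast; linarith [Nat.le_ceil s])
    _ ≤ ‖g x‖ * (2 * (1 + ∑ i, (x i : ℝ) ^ 2)) ^ ⌈s⌉₊ := by
        gcongr
        nlinarith [sq_nonneg (enorm' x - 1)]
    _ = 2 ^ ⌈s⌉₊ * ((1 + ∑ i, (x i : ℝ) ^ 2) ^ ⌈s⌉₊ * ‖g x‖) := by rw [mul_pow]; ring
    _ ≤ 2 ^ ⌈s⌉₊ * C := by gcongr; exact hC x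

theorem rapidDecay_of_mem_smoothVectors {g : (Fin n → ℤ) → ℂ} (hg : g ∈ smoothVectors n) :
    RapidDecay g :=
  rapidDecay_of_forall_weight_pow_mul_le fun m => by
    obtain ⟨C, hC⟩ := exists_norm_le_of_mem_smoothVectors (weight_pow_mul_mem_smoothVectors m hg)
    refine ⟨C, fun x => le_of_eq_of_le ?_ (hC x)⟩
    rw [norm_mul, norm_pow, norm_real, Real.norm_of_nonneg (by positivity)]

theorem coe_lpSingle_one (y : Fin n → ℤ) : ⇑(lp.single 2 y (1 : ℂ) : Ltwo n) = delta y := by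
  funext x
  by_cases hx : x = y <;> simp [lp.single_apply, delta, hx]

def modulation (t : Fin n → ℝ) : Ltwo n ≃L[ℂ] Ltwo n :=
  .equivOfInverse (weightedShift 0 (character t) fun x => (norm_character t x).le)
    (weightedShift 0 (character (-t)) fun x => (norm_character (-t) x).le)
    (fun h => lp.ext <| funext fun x => by simp; linear_combination h x * character_neg_mul t x)
    (fun h => lp.ext <| funext fun x => by simp; linear_combination h x * character_neg_mul t x)

theorem modulation_apply (t : Fin n → ℝ) (h : Ltwo n) (x : Fin n → ℤ) :
    modulation t h x = character t x * h x := by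
  simp [modulation]

theorem modulation_symm_apply (t : Fin n → ℝ) (h : Ltwo n) (x : Fin n → ℤ) :
    (modulation t).symm h x = character (-t) x * h x := by
  simp [modulation]

theorem modulation_symm_lpSingle_zero (t : Fin n → ℝ) :
    (modulation t).symm (lp.single 2 0 1) = lp.single 2 0 1 := by
  refine lp.ext (funext fun x => ?_)
  rw [modulation_symm_apply, coe_lpSingle_one]
  by_cases hx : x = 0 <;> simp [delta, hx]

section Operators

variable {θ : Fin n → Fin n → ℂ} (hθ : ∀ j k, ‖θ j k‖ = 1)

/-- The twisted left translation `δ_y ♮ ·`. -/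
def leftShift (y : Fin n → ℤ) : Ltwo n →L[ℂ] Ltwo n :=
  weightedShift y (fun x => coc θ y (x - y)) fun _ => (norm_coc hθ _ _).le

/-- The twisted right translation `· ♮ δ_z`. -/
def rightShift (z : Fin n → ℤ) : Ltwo n →L[ℂ] Ltwo n :=
  weightedShift z (fun x => coc θ (x - z) z) fun _ => (norm_coc hθ _ _).le

def leftConvOp (c : (Fin n → ℤ) → ℂ) : Ltwo n →L[ℂ] Ltwo n :=
  ∑' y, c y • leftShift hθ y

def rightConvOp (c : (Fin n → ℤ) → ℂ) : Ltwo n →L[ℂ] Ltwo n :=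
  ∑' z, c z • rightShift hθ z

variable {c : (Fin n → ℤ) → ℂ} (hc : Summable fun y => ‖c y‖)
include hc

theorem leftConvOp_apply (h : Ltwo n) (x : Fin n → ℤ) :
    leftConvOp hθ c h x = tconv (coc θ) c h x := by
  have hs : Summable fun y => c y • leftShift hθ y :=
    summable_smul_of_norm_le_one hc fun y => norm_weightedShift_le _ _ _
  rw [leftConvOp, tsum_clm_apply_apply hs, tconv]
  exact tsum_congr fun y => by simp [leftShift, lp.coeFn_smul]; ring

theorem rightConvOp_apply (h : Ltwo n) (x : Fin n → ℤ) :
    rightConvOp hθ c h x = tconv (coc θ) h c x := by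
  have hs : Summable fun z => c z • rightShift hθ z :=
    summable_smul_of_norm_le_one hc fun z => norm_weightedShift_le _ _ _
  rw [rightConvOp, tsum_clm_apply_apply hs, tconv_eq_tsum_sub]
  exact tsum_congr fun y => by simp [rightShift, lp.coeFn_smul]; ring

end Operators

def modulationConj (t : Fin n → ℝ) (T : Ltwo n ≃L[ℂ] Ltwo n) : Ltwo n ≃L[ℂ] Ltwo n :=
  ((modulation t).symm.trans T).trans (modulation t)

section Inverse

variable {θ : Fin n → Fin n → ℂ} (hθ : ∀ j k, ‖θ j k‖ = 1) {f : (Fin n → ℤ) → ℂ}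
  {T : Ltwo n ≃L[ℂ] Ltwo n}
  (hT : ∀ (h : Ltwo n) (x : Fin n → ℤ), (T h : (Fin n → ℤ) → ℂ) x = tconv (coc θ) f (⇑h) x)
include hT

theorem modulationConj_eq_leftConvOp (hf : Summable fun y => ‖f y‖) (t : Fin n → ℝ) :
    (modulationConj t T : Ltwo n →L[ℂ] Ltwo n) = leftConvOp hθ fun y => character t y * f y := by
  refine ContinuousLinearMap.ext fun h => lp.ext <| funext fun x => ?_
  have hχf : Summable fun y => ‖character t y * f y‖ := by simpa [norm_character] using hf
  calc (modulation t (T ((modulation t).symm h)) : (Fin n → ℤ) → ℂ) x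
      = character t x * tconv (coc θ) f (fun y => character (-t) y * h y) x := by
        rw [modulation_apply, hT]
        congr 2
        exact funext (modulation_symm_apply t h)
    _ = tconv (coc θ) (fun y => character t y * f y)
          (fun y => character t y * (character (-t) y * h y)) x :=
        (tconv_mul_char (character_add t) _ _ x).symm
    _ = leftConvOp hθ (fun y => character t y * f y) h x := by
        rw [leftConvOp_apply hθ hχf]
        congr 1
        funext y
        rw [← mul_assoc, mul_comm (character t y), character_neg_mul, one_mul]

include hθ in
theorem contDiff_modulationConj (hf : RapidDecay f) :
    ContDiff ℝ ∞ fun t => (modulationConj t T : Ltwo n →L[ℂ] Ltwo n) := by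
  have hf₀ : Summable fun y => ‖f y‖ := by simpa using hf.summable_norm_mul_pow 0
  simp only [modulationConj_eq_leftConvOp hθ hT hf₀, leftConvOp, mul_smul]
  refine contDiff_tsum_exp_mul_I_smul pairing _ fun k => ?_
  refine ((hf.summable_norm_mul_pow k).mul_left ((n : ℝ) ^ k)).of_nonneg_of_le
    (fun y => by positivity) fun y => ?_
  have := enorm'_nonneg y
  calc ‖f y • leftShift hθ y‖ * ‖pairing y‖ ^ k ≤ ‖f y‖ * (n * (1 + enorm' y)) ^ k := by
        gcongr
        · exact (norm_smul_le _ _).trans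
            (mul_le_of_le_one_right (norm_nonneg _) (norm_weightedShift_le _ _ _))
        · exact (norm_pairing_le y).trans (by gcongr; linarith)
    _ = n ^ k * (‖f y‖ * (1 + enorm' y) ^ k) := by rw [mul_pow]; ring

include hθ in
theorem symm_lpSingle_zero_mem_smoothVectors (hf : RapidDecay f) :
    ⇑(T.symm (lp.single 2 0 1)) ∈ smoothVectors n := by
  refine ⟨fun t => modulation t (T.symm (lp.single 2 0 1)), ?_, fun t x => modulation_apply t _ x⟩
  have hinv : (fun t => modulation t (T.symm (lp.single 2 0 1))) = fun t =>
      ContinuousLinearMap.inverse (modulationConj t T : Ltwo n →L[ℂ] Ltwo n) (lp.single 2 0 1) := by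
    funext t
    simp [ContinuousLinearMap.inverse_equiv, modulationConj, modulation_symm_lpSingle_zero]
  rw [hinv, contDiff_iff_contDiffAt]
  intro t
  have hK := ((contDiffAt_map_inverse (modulationConj t T)).restrict_scalars ℝ).comp t
    (contDiff_modulationConj hθ hT hf).contDiffAt
  exact ((ContinuousLinearMap.apply ℂ (Ltwo n) (lp.single 2 0 1)).restrictScalars ℝ).contDiff
    |>.contDiffAt.comp t hK

theorem tconv_symm_lpSingle_zero : tconv (coc θ) f ⇑(T.symm (lp.single 2 0 1)) = delta 0 := by
  funext x
  rw [← hT, T.apply_symm_apply, coe_lpSingle_one]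

include hθ in
theorem apply_rightShift (z : Fin n → ℤ) (h : Ltwo n) :
    T (rightShift hθ z h) = rightShift hθ z (T h) := by
  have hne : ∀ j k, θ j k ≠ 0 := fun j k => ne_zero_of_norm_ne_zero (by simp [hθ])
  refine lp.ext (funext fun x => ?_)
  simp only [rightShift, weightedShift_apply, hT]
  exact tconv_right_translate (coc_add_left hne) (coc_add_right hne) f h z x

theorem apply_rightConvOp (hf : Summable fun y => ‖f y‖) (h : Ltwo n) :
    T (rightConvOp hθ f h) = rightConvOp hθ f (T h) := by
  have hs : Summable fun z => f z • rightShift hθ z :=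
    summable_smul_of_norm_le_one hf fun z => norm_weightedShift_le _ _ _
  have happly : ∀ v, rightConvOp hθ f v = ∑' z, f z • rightShift hθ z v := fun v =>
    (ContinuousLinearMap.apply ℂ _ v).map_tsum hs
  have hsh : Summable fun z => f z • rightShift hθ z h := hs.mapL (.apply ℂ _ h)
  rw [happly, happly, ← ContinuousLinearEquiv.coe_coe, (T : Ltwo n →L[ℂ] Ltwo n).map_tsum hsh]
  simp [apply_rightShift hθ hT]

include hθ in
theorem symm_lpSingle_zero_tconv (hf : Summable fun y => ‖f y‖) :
    tconv (coc θ) ⇑(T.symm (lp.single 2 0 1)) f = delta 0 := by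
  have hδ : rightConvOp hθ f (lp.single 2 0 1) = T (lp.single 2 0 1) := lp.ext <| funext fun x => by
    rw [rightConvOp_apply hθ hf, hT, coe_lpSingle_one, tconv_delta_left coc_zero_left,
      tconv_delta_right coc_zero_right]
  funext x
  rw [← rightConvOp_apply hθ hf, ← T.symm_apply_apply (rightConvOp hθ f _),
    apply_rightConvOp hθ hT hf, T.apply_symm_apply, hδ, T.symm_apply_apply, coe_lpSingle_one]

end Inverse

end NoncommTorus

theorem statement16_general {n : ℕ} (θ : Fin n → Fin n → ℂ)
    (hUnit : ∀ j k, ‖θ j k‖ = 1)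
    (f : (Fin n → ℤ) → ℂ)
    (hf : RapidDecay f)
    (T : Ltwo n ≃L[ℂ] Ltwo n)
    (hT : ∀ (h : Ltwo n) (x : Fin n → ℤ), (T h : (Fin n → ℤ) → ℂ) x = tconv (coc θ) f (⇑h) x) :
    ∃ g : (Fin n → ℤ) → ℂ, RapidDecay g ∧
      tconv (coc θ) f g = delta 0 ∧ tconv (coc θ) g f = delta 0 := by
  have hf₁ : Summable fun y => ‖f y‖ := by
    simpa using hf.summable_norm_mul_pow 0
  exact ⟨_, NoncommTorus.rapidDecay_of_mem_smoothVectors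
      (NoncommTorus.symm_lpSingle_zero_mem_smoothVectors hUnit hT hf),
    NoncommTorus.tconv_symm_lpSingle_zero hT, NoncommTorus.symm_lpSingle_zero_tconv hUnit hT hf₁⟩

/-- the smooth non-commutative torus S(ℤⁿ, θ) of rapidly decreasing
sequences is inverse-closed in C*(θ): if f is rapidly decreasing and λ(f) is
invertible as a bounded operator on ℓ²(ℤⁿ), then f has a two-sided ♮-inverse
that is rapidly decreasing. -/
theorem statement16 {n : ℕ} (θ : Fin n → Fin n → ℂ)
    (hUnit : ∀ j k, ‖θ j k‖ = 1)
    (hHerm : ∀ j k, θ k j = starRingEnd ℂ (θ j k))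
    (hDiag : ∀ j, θ j j = 1)
    (f : (Fin n → ℤ) → ℂ)
    (hf : RapidDecay f)
    (T : Ltwo n ≃L[ℂ] Ltwo n)
    (hT : ∀ (h : Ltwo n) (x : Fin n → ℤ), (T h : (Fin n → ℤ) → ℂ) x = tconv (coc θ) f (⇑h) x) :
    ∃ g : (Fin n → ℤ) → ℂ, RapidDecay g ∧
      tconv (coc θ) f g = delta 0 ∧ tconv (coc θ) g f = delta 0 :=
  statement16_general θ hUnit f hf T hT
end
end
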